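/- Let L_t denote the operator f ↦ −t f'(t) acting on smooth functions of t > 0. For every nonnegative integer N and all real x, t: applying L N times to the function t ↦ e^{−(x−t)²+x²} gives (−1)^N e^{−(x−t)²+x²} ∑_{n=0}^{N} S(N, n) t^n H_n(x − t). -/

import Mathlib

/-- Stirling numbers of the second kind. -/
def stirling : ℕ → ℕ → ℕ
  | 0, 0 => 1
  | 0, _ + 1 => 0
  | _ + 1, 0 => 0
  | N + 1, n + 1 => (n + 1) * stirling N (n + 1) + stirling N n

/-- The physicists' Hermite polynomial via Rodrigues's formula. -/
noncomputable def hermiteR (n : ℕ) (x : ℝ) : ℝ :=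
  (-1 : ℝ) ^ n * Real.exp (x ^ 2) * iteratedDeriv n (fun y => Real.exp (-y ^ 2)) x

/-- The operator `L = -t ∂ₜ`. -/
noncomputable def Lop (f : ℝ → ℝ) : ℝ → ℝ := fun t => -t * deriv f t

/-! For smooth `f`, `(-t d/dt)^N f = (-1)^N ∑ₙ S(N, n) tⁿ f⁽ⁿ⁾`: applying `-t d/dt` to `tⁿ f⁽ⁿ⁾`
gives `-(n tⁿ f⁽ⁿ⁾ + tⁿ⁺¹ f⁽ⁿ⁺¹⁾)`, and collecting terms is exactly the recurrence
`S(N+1, n+1) = (n+1) S(N, n+1) + S(N, n)`. For `f(t) = exp(x²) exp(-(x - t)²)`, Rodrigues' formula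
identifies `f⁽ⁿ⁾(t)` with `f(t) Hₙ(x - t)`. -/

open scoped ContDiff

theorem stirling_eq_stirlingSecond : stirling = Nat.stirlingSecond := by
  funext N n
  induction N generalizing n with
  | zero => cases n <;> rfl
  | succ N ih => cases n <;> simp only [stirling, Nat.stirlingSecond, ih]

theorem Nat.sum_stirlingSecond_smul_succ {M : Type*} [AddCommMonoid M] (N : ℕ) (u : ℕ → M) :
    ∑ n ∈ Finset.range (N + 1), stirlingSecond N n • (n • u n + u (n + 1))
      = ∑ m ∈ Finset.range (N + 2), stirlingSecond (N + 1) m • u m := by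
  have hshift : ∑ n ∈ Finset.range (N + 1), stirlingSecond N n • n • u n
      = ∑ n ∈ Finset.range (N + 1), (n + 1) • stirlingSecond N (n + 1) • u (n + 1) := by
    rw [Finset.sum_range_succ' (fun n => stirlingSecond N n • n • u n),
      Finset.sum_range_succ (fun n => (n + 1) • stirlingSecond N (n + 1) • u (n + 1)),
      stirlingSecond_eq_zero_of_lt N.lt_succ_self]
    simp [smul_comm (stirlingSecond N _)]
  rw [Finset.sum_range_succ' _ (N + 1), stirlingSecond_succ_zero, zero_smul, add_zero]
  simp only [smul_add, Finset.sum_add_distrib, hshift, stirlingSecond_succ_succ, add_smul, mul_smul]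

section EulerOperator

variable {f : ℝ → ℝ}

theorem hasDerivAt_pow_mul_iteratedDeriv (hf : ContDiff ℝ ∞ f) (n : ℕ) (t : ℝ) :
    HasDerivAt (fun s => s ^ n * iteratedDeriv n f s)
      (n * t ^ (n - 1) * iteratedDeriv n f t + t ^ n * iteratedDeriv (n + 1) f t) t := by
  have hD : HasDerivAt (iteratedDeriv n f) (iteratedDeriv (n + 1) f t) t := by
    rw [iteratedDeriv_succ]
    exact ((hf.differentiable_iteratedDeriv n (by exact_mod_cast WithTop.coe_lt_top _)) t).hasDerivAt
  exact (hasDerivAt_pow n t).mul hD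

theorem iterate_Lop_eq_sum_iteratedDeriv (hf : ContDiff ℝ ∞ f) (N : ℕ) :
    Lop^[N] f = fun t => (-1) ^ N *
      ∑ n ∈ Finset.range (N + 1), (Nat.stirlingSecond N n : ℝ) * t ^ n * iteratedDeriv n f t := by
  induction N with
  | zero => funext t; simp
  | succ N ih =>
    funext t
    have hD := (HasDerivAt.fun_sum (u := Finset.range (N + 1)) fun n _ =>
      (hasDerivAt_pow_mul_iteratedDeriv hf n t).const_mul (Nat.stirlingSecond N n : ℝ)).const_mul
        ((-1 : ℝ) ^ N)
    have hpow (n : ℕ) : t * (n * t ^ (n - 1)) = n * t ^ n := by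
      rcases n with _ | n
      · simp
      · rw [Nat.add_sub_cancel, pow_succ]; ring
    rw [Function.iterate_succ_apply', ih, Lop]
    simp only [mul_assoc] at hD ⊢
    have hsum := Nat.sum_stirlingSecond_smul_succ N fun n => t ^ n * iteratedDeriv n f t
    simp only [nsmul_eq_mul] at hsum
    rw [hD.deriv, ← hsum, Finset.mul_sum, Finset.mul_sum, Finset.mul_sum]
    refine Finset.sum_congr rfl fun n _ => ?_
    linear_combination (-(-1) ^ N * (Nat.stirlingSecond N n : ℝ) * iteratedDeriv n f t) * hpow n

end EulerOperator

theorem iteratedDeriv_exp_neg_sub_sq_add_sq (n : ℕ) (x t : ℝ) :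
    iteratedDeriv n (fun s => Real.exp (-(x - s) ^ 2 + x ^ 2)) t
      = Real.exp (-(x - t) ^ 2 + x ^ 2) * hermiteR n (x - t) := by
  have hsplit : (fun s => Real.exp (-(x - s) ^ 2 + x ^ 2))
      = fun s => Real.exp (x ^ 2) * Real.exp (-(x - s) ^ 2) := by
    funext s; rw [← Real.exp_add]; ring_nf
  have hreflect := iteratedDeriv_comp_const_sub (n := n) (s := x) (f := fun y => Real.exp (-y ^ 2))
  rw [hsplit, iteratedDeriv_const_mul_field, hreflect, hermiteR]
  simp only [smul_eq_mul]
  have hexp : Real.exp (-(x - t) ^ 2 + x ^ 2) * Real.exp ((x - t) ^ 2) = Real.exp (x ^ 2) := by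
    rw [← Real.exp_add]; ring_nf
  linear_combination (-1 : ℝ) ^ n * iteratedDeriv n (fun y => Real.exp (-y ^ 2)) (x - t) * hexp.symm

theorem Lop_pow_generating_function (N : ℕ) (x t : ℝ) :
    (Lop^[N] (fun s => Real.exp (-(x - s) ^ 2 + x ^ 2))) t
      = (-1 : ℝ) ^ N * Real.exp (-(x - t) ^ 2 + x ^ 2) *
          ∑ n ∈ Finset.range (N + 1), (stirling N n : ℝ) * t ^ n * hermiteR n (x - t) := by
  rw [iterate_Lop_eq_sum_iteratedDeriv (by fun_prop), stirling_eq_stirlingSecond, mul_assoc,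
    Finset.mul_sum]
  simp only [iteratedDeriv_exp_neg_sub_sq_add_sq]
  congr 1
  exact Finset.sum_congr rfl fun n _ => by ring
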